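/- Let L be a nonnegative random variable with an asymptotically exponential tail with decay rate μ > 0, and let c > 0 and k ∈ (0, 1] be constants. Then lim_{n→∞} (log E[(1 − k e^{−cL})^n]) / (log n) = −μ/c. -/

import Mathlib

/-!
Write `T x = P[L > x]` and `F n = E[(1 - k e^{-cL})^n]`. Splitting according to whether `L > x`
gives `T x * (1 - k e^{-cx})^n ≤ F n ≤ (1 - k e^{-cx})^n + T x` for every `x ≥ 0`. At
`x = log n / c` the lower bound is `T x * (1 - k/n)^n ≈ e^{-k} n^{-μ/c + o(1)}`. At
`x = θ log n / c` with `θ < 1`, the first term of the upper bound is at most `exp (-k n^{1-θ})`,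
negligible next to `T x = n^{-θμ/c + o(1)}`; letting `θ → 1` gives the matching upper bound.
-/

open MeasureTheory Filter Real Topology

section PowerLaw

lemma tendsto_log_natCast_atTop : Tendsto (fun n : ℕ => log n) atTop atTop :=
  tendsto_log_atTop.comp tendsto_natCast_atTop_atTop

lemma eventually_ne_zero_of_tendsto_log_div {T : ℝ → ℝ} {a : ℝ} (ha : a ≠ 0)
    (hT : Tendsto (fun x => log (T x) / x) atTop (𝓝 a)) : ∀ᶠ x in atTop, T x ≠ 0 := by
  filter_upwards [hT.eventually_ne ha] with x hx hTx
  simp [hTx] at hx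

lemma tendsto_comp_mul_log_div_log {h : ℝ → ℝ} {a r : ℝ} (hr : 0 < r)
    (hh : Tendsto (fun x => h x / x) atTop (𝓝 a)) :
    Tendsto (fun n : ℕ => h (r * log n) / log n) atTop (𝓝 (r * a)) := by
  have hlim := (hh.comp (tendsto_log_natCast_atTop.const_mul_atTop hr)).const_mul r
  refine hlim.congr fun n => ?_
  simp only [Function.comp_apply, ← mul_div_assoc, mul_div_mul_left _ _ hr.ne']

lemma tendsto_log_one_sub_div_pow (k : ℝ) :
    Tendsto (fun n : ℕ => log ((1 - k / n) ^ n)) atTop (𝓝 (-k)) := by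
  have h := (tendsto_one_add_div_pow_exp (-k)).log (exp_pos _).ne'
  simpa only [log_exp, neg_div, ← sub_eq_add_neg] using h

lemma eventually_neg_mul_exp_mul_log_le {a : ℕ → ℝ} {ℓ k b : ℝ} (hk : 0 < k) (hb : 0 < b)
    (ha : Tendsto (fun n => a n / log n) atTop (𝓝 ℓ)) :
    ∀ᶠ n : ℕ in atTop, -(k * exp (b * log n)) ≤ a n := by
  set M := |ℓ| + 1
  have hM : 0 < M := by positivity
  have hlog_le_exp : ∀ᶠ n : ℕ in atTop, M * log n ≤ k * exp (b * log n) := by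
    filter_upwards [tendsto_log_natCast_atTop.eventually
      ((isLittleO_pow_exp_pos_mul_atTop 1 hb).bound (div_pos hk hM)),
      tendsto_log_natCast_atTop.eventually_ge_atTop 0] with n hn hlog
    rw [pow_one, norm_of_nonneg hlog, norm_of_nonneg (exp_pos _).le, div_mul_eq_mul_div,
      le_div_iff₀ hM] at hn
    linarith
  filter_upwards [ha.eventually (lt_mem_nhds (show -M < ℓ by linarith [neg_abs_le ℓ])),
    tendsto_log_natCast_atTop.eventually_gt_atTop 0, hlog_le_exp] with n hn hlog hexp
  rw [lt_div_iff₀ hlog] at hn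
  linarith

lemma one_sub_pow_le_exp_neg_mul {t : ℝ} (ht : t ≤ 1) (n : ℕ) :
    (1 - t) ^ n ≤ exp (-(n * t)) := by
  rw [← mul_neg, exp_nat_mul]
  exact pow_le_pow_left₀ (sub_nonneg.2 ht) (by linarith [add_one_le_exp (-t)]) n

variable {F : ℕ → ℝ} {T : ℝ → ℝ} {μ c k : ℝ}

lemma eventually_log_tail_add_le_log (hc : 0 < c)
    (hlow : ∀ n x, 0 ≤ x → T x * (1 - k * exp (-(c * x))) ^ n ≤ F n)
    (hT0 : ∀ x, 0 ≤ T x) (hTne : ∀ᶠ x in atTop, T x ≠ 0) :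
    ∀ᶠ n : ℕ in atTop, 0 < F n ∧
      log (T (c⁻¹ * log n)) + log ((1 - k / n) ^ n) ≤ log (F n) := by
  -- at `x = log n / c` the factor `k e^{-cx}` is exactly `k / n`
  filter_upwards [(tendsto_log_natCast_atTop.const_mul_atTop (inv_pos.2 hc)).eventually hTne,
    tendsto_natCast_atTop_atTop.eventually_gt_atTop k, eventually_gt_atTop 0] with n hTn hkn hn
  have hn' : (0 : ℝ) < n := Nat.cast_pos.2 hn
  have hTpos : 0 < T (c⁻¹ * log n) := (hT0 _).lt_of_ne' hTn
  have hpow : 0 < (1 - k / n) ^ n := pow_pos (sub_pos.2 ((div_lt_one hn').2 hkn)) n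
  have hx : 0 ≤ c⁻¹ * log n := mul_nonneg (inv_nonneg.2 hc.le) (log_natCast_nonneg n)
  have hbound := hlow n _ hx
  rw [mul_inv_cancel_left₀ hc.ne', exp_neg, exp_log hn', ← div_eq_mul_inv] at hbound
  refine ⟨(mul_pos hTpos hpow).trans_le hbound, ?_⟩
  rw [← log_mul hTpos.ne' hpow.ne']
  exact log_le_log (mul_pos hTpos hpow) hbound

lemma tendsto_log_tail_add_div_log (hc : 0 < c)
    (hT : Tendsto (fun x => log (T x) / x) atTop (𝓝 (-μ))) :
    Tendsto (fun n : ℕ => (log (T (c⁻¹ * log n)) + log ((1 - k / n) ^ n)) / log n) atTop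
      (𝓝 (-(μ / c))) := by
  have h := (tendsto_comp_mul_log_div_log (inv_pos.2 hc) hT).add
    ((tendsto_log_one_sub_div_pow k).div_atTop tendsto_log_natCast_atTop)
  simp only [add_div]
  convert h using 2
  ring

lemma eventually_log_le_log_two_add_log_tail {θ : ℝ} (hθ0 : 0 < θ) (hθ1 : θ < 1) (hc : 0 < c)
    (hk0 : 0 < k) (hk1 : k ≤ 1)
    (hup : ∀ n x, 0 ≤ x → F n ≤ (1 - k * exp (-(c * x))) ^ n + T x)
    (hT0 : ∀ x, 0 ≤ T x) (hTne : ∀ᶠ x in atTop, T x ≠ 0) (hFpos : ∀ᶠ n in atTop, 0 < F n)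
    (hT : Tendsto (fun x => log (T x) / x) atTop (𝓝 (-μ))) :
    ∀ᶠ n : ℕ in atTop, log (F n) ≤ log 2 + log (T (θ / c * log n)) := by
  filter_upwards [(tendsto_log_natCast_atTop.const_mul_atTop (div_pos hθ0 hc)).eventually hTne,
    eventually_neg_mul_exp_mul_log_le hk0 (sub_pos.2 hθ1)
      (tendsto_comp_mul_log_div_log (div_pos hθ0 hc) hT),
    hFpos, eventually_gt_atTop 0] with n hTn hdom hF hn
  have hn' : (0 : ℝ) < n := Nat.cast_pos.2 hn
  have hTpos : 0 < T (θ / c * log n) := (hT0 _).lt_of_ne' hTn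
  have hx : 0 ≤ θ / c * log n := mul_nonneg (div_nonneg hθ0.le hc.le) (log_natCast_nonneg n)
  have hexp : (n : ℝ) * (k * exp (-(c * (θ / c * log n)))) = k * exp ((1 - θ) * log n) := by
    have hcx : c * (θ / c * log n) = θ * log n := by field_simp
    rw [hcx, sub_mul, one_mul, sub_eq_add_neg, exp_add, exp_log hn']
    ring
  -- `(1 - k e^{-cx})^n ≤ exp (-k n^{1-θ})` decays faster than any power of `n`, the tail does not
  have hpow : (1 - k * exp (-(c * (θ / c * log n)))) ^ n ≤ T (θ / c * log n) := by
    refine (one_sub_pow_le_exp_neg_mul ?_ n).trans ?_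
    · exact mul_le_one₀ hk1 (exp_pos _).le (exp_le_one_iff.2 (by nlinarith))
    · rw [hexp, ← exp_log hTpos]
      exact exp_le_exp.2 hdom
  rw [← log_mul two_ne_zero hTpos.ne']
  exact log_le_log hF ((hup n _ hx).trans (by linarith))

lemma tendsto_log_two_add_log_tail_div_log {θ : ℝ} (hθ0 : 0 < θ) (hc : 0 < c)
    (hT : Tendsto (fun x => log (T x) / x) atTop (𝓝 (-μ))) :
    Tendsto (fun n : ℕ => (log 2 + log (T (θ / c * log n))) / log n) atTop
      (𝓝 (-(θ * μ / c))) := by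
  have h := (tendsto_const_nhds (x := log 2).div_atTop tendsto_log_natCast_atTop).add
    (tendsto_comp_mul_log_div_log (div_pos hθ0 hc) hT)
  simp only [add_div]
  convert h using 2
  ring

theorem tendsto_log_div_log_of_tail_bounds (hμ : 0 < μ) (hc : 0 < c) (hk0 : 0 < k) (hk1 : k ≤ 1)
    (hT0 : ∀ x, 0 ≤ T x)
    (hlow : ∀ n x, 0 ≤ x → T x * (1 - k * exp (-(c * x))) ^ n ≤ F n)
    (hup : ∀ n x, 0 ≤ x → F n ≤ (1 - k * exp (-(c * x))) ^ n + T x)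
    (hT : Tendsto (fun x => log (T x) / x) atTop (𝓝 (-μ))) :
    Tendsto (fun n : ℕ => log (F n) / log n) atTop (𝓝 (-(μ / c))) := by
  have hTne := eventually_ne_zero_of_tendsto_log_div (neg_ne_zero.2 hμ.ne') hT
  have hlower := eventually_log_tail_add_le_log hc hlow hT0 hTne
  have hlog := tendsto_log_natCast_atTop.eventually_gt_atTop 0
  refine tendsto_order.2 ⟨fun a ha => ?_, fun b hb => ?_⟩
  · filter_upwards [(tendsto_log_tail_add_div_log hc hT).eventually (lt_mem_nhds ha), hlower,
      hlog] with n hn hF hlogn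
    exact hn.trans_le (div_le_div_of_nonneg_right hF.2 hlogn.le)
  · have hb' : -(b * c) / μ < 1 := by
      rw [gt_iff_lt, neg_lt, lt_div_iff₀ hc] at hb
      rw [div_lt_one hμ]
      linarith
    obtain ⟨θ, hθ, hθ1⟩ := exists_between (max_lt zero_lt_one hb')
    obtain ⟨hθ0, hθb⟩ := max_lt_iff.1 hθ
    have hθμ : -(θ * μ / c) < b := by
      rw [div_lt_iff₀ hμ] at hθb
      rw [neg_lt, lt_div_iff₀ hc]
      linarith
    filter_upwards [(tendsto_log_two_add_log_tail_div_log hθ0 hc hT).eventually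
        (gt_mem_nhds hθμ),
      eventually_log_le_log_two_add_log_tail hθ0 hθ1 hc hk0 hk1 hup hT0 hTne
        (hlower.mono fun _ hn => hn.1) hT,
      hlog] with n hn hF hlogn
    exact (div_le_div_of_nonneg_right hF hlogn.le).trans_lt hn

end PowerLaw

section Collision

variable {Ω : Type*} {mΩ : MeasurableSpace Ω} {P : Measure Ω} [IsProbabilityMeasure P]

lemma integral_le_add_measureReal {f : Ω → ℝ} {s : Set Ω} {a : ℝ} (hs : MeasurableSet s)
    (hf : Integrable f P) (ha : 0 ≤ a) (hf1 : ∀ ω, f ω ≤ 1) (hfs : ∀ ω ∉ s, f ω ≤ a) :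
    ∫ ω, f ω ∂P ≤ a + P.real s := by
  calc ∫ ω, f ω ∂P ≤ ∫ ω, (a + s.indicator (fun _ => (1 : ℝ)) ω) ∂P := by
        refine integral_mono hf ((integrable_const a).add ((integrable_const 1).indicator hs))
          fun ω => ?_
        by_cases hω : ω ∈ s
        · simp only [Set.indicator_of_mem hω]
          linarith [hf1 ω]
        · simpa [Set.indicator_of_notMem hω] using hfs ω hω
    _ = a + P.real s := by
        rw [integral_add (integrable_const a) ((integrable_const 1).indicator hs),
          integral_indicator_const _ hs]
        simp

variable {c k : ℝ}

lemma one_sub_mul_exp_neg_mul_nonneg (hc : 0 ≤ c) (hk1 : k ≤ 1) {t : ℝ}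
    (ht : 0 ≤ t) : 0 ≤ 1 - k * exp (-(c * t)) :=
  sub_nonneg.2 (mul_le_one₀ hk1 (exp_pos _).le (exp_le_one_iff.2 (by nlinarith)))

lemma one_sub_mul_exp_neg_mul_le_one (hk0 : 0 ≤ k) (t : ℝ) : 1 - k * exp (-(c * t)) ≤ 1 :=
  sub_le_self _ (mul_nonneg hk0 (exp_pos _).le)

lemma monotone_one_sub_mul_exp_neg_mul (hc : 0 ≤ c) (hk0 : 0 ≤ k) :
    Monotone fun t => 1 - k * exp (-(c * t)) :=
  fun _ _ hst => by dsimp only; gcongr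

variable {L : Ω → ℝ}

lemma integrable_one_sub_mul_exp_neg_mul_pow (hLm : Measurable L) (hLnn : ∀ ω, 0 ≤ L ω)
    (hc : 0 ≤ c) (hk0 : 0 ≤ k) (hk1 : k ≤ 1) (n : ℕ) :
    Integrable (fun ω => (1 - k * exp (-(c * L ω))) ^ n) P := by
  refine Integrable.of_bound (by fun_prop) 1 (ae_of_all _ fun ω => ?_)
  have h0 := one_sub_mul_exp_neg_mul_nonneg hc hk1 (hLnn ω)
  rw [norm_of_nonneg (pow_nonneg h0 n)]
  exact pow_le_one₀ h0 (one_sub_mul_exp_neg_mul_le_one hk0 _)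

lemma tail_mul_pow_le_integral (hLm : Measurable L) (hLnn : ∀ ω, 0 ≤ L ω)
    (hc : 0 ≤ c) (hk0 : 0 ≤ k) (hk1 : k ≤ 1) (n : ℕ) {x : ℝ} (hx : 0 ≤ x) :
    (P {ω | L ω > x}).toReal * (1 - k * exp (-(c * x))) ^ n ≤
      ∫ ω, (1 - k * exp (-(c * L ω))) ^ n ∂P := by
  have hsub : {ω | L ω > x} ⊆ {ω | (1 - k * exp (-(c * x))) ^ n ≤
      (1 - k * exp (-(c * L ω))) ^ n} := fun ω hω =>
    pow_le_pow_left₀ (one_sub_mul_exp_neg_mul_nonneg hc hk1 hx)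
      (monotone_one_sub_mul_exp_neg_mul hc hk0 (le_of_lt hω)) n
  calc (P {ω | L ω > x}).toReal * (1 - k * exp (-(c * x))) ^ n
      ≤ (1 - k * exp (-(c * x))) ^ n *
          P.real {ω | (1 - k * exp (-(c * x))) ^ n ≤ (1 - k * exp (-(c * L ω))) ^ n} := by
        rw [mul_comm]
        exact mul_le_mul_of_nonneg_left (measureReal_mono hsub)
          (pow_nonneg (one_sub_mul_exp_neg_mul_nonneg hc hk1 hx) n)
    _ ≤ ∫ ω, (1 - k * exp (-(c * L ω))) ^ n ∂P :=
        mul_meas_ge_le_integral_of_nonneg (ae_of_all _ fun ω =>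
          pow_nonneg (one_sub_mul_exp_neg_mul_nonneg hc hk1 (hLnn ω)) n)
          (integrable_one_sub_mul_exp_neg_mul_pow hLm hLnn hc hk0 hk1 n) _

lemma integral_le_pow_add_tail (hLm : Measurable L) (hLnn : ∀ ω, 0 ≤ L ω)
    (hc : 0 ≤ c) (hk0 : 0 ≤ k) (hk1 : k ≤ 1) (n : ℕ) {x : ℝ} (hx : 0 ≤ x) :
    ∫ ω, (1 - k * exp (-(c * L ω))) ^ n ∂P ≤
      (1 - k * exp (-(c * x))) ^ n + (P {ω | L ω > x}).toReal :=
  integral_le_add_measureReal (measurableSet_lt measurable_const hLm)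
    (integrable_one_sub_mul_exp_neg_mul_pow hLm hLnn hc hk0 hk1 n)
    (pow_nonneg (one_sub_mul_exp_neg_mul_nonneg hc hk1 hx) n)
    (fun ω => pow_le_one₀ (one_sub_mul_exp_neg_mul_nonneg hc hk1 (hLnn ω))
      (one_sub_mul_exp_neg_mul_le_one hk0 _))
    (fun ω hω => pow_le_pow_left₀ (one_sub_mul_exp_neg_mul_nonneg hc hk1 (hLnn ω))
      (monotone_one_sub_mul_exp_neg_mul hc hk0 (not_lt.1 hω)) n)

end Collision

/-- The general power-law asymptotic underlying Proposition 1: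
`E[(1 - k e^{-cL})^n]` decays as a power law of index `μ/c`. -/
theorem stmt2 {Ω : Type*} {mΩ : MeasurableSpace Ω} (P : Measure Ω) [IsProbabilityMeasure P]
    (L : Ω → ℝ) (hLm : Measurable L) (hLnn : ∀ ω, 0 ≤ L ω)
    (μ c k : ℝ) (hμ : 0 < μ) (hc : 0 < c) (hk0 : 0 < k) (hk1 : k ≤ 1)
    (htail : Tendsto (fun x : ℝ => Real.log (P {ω | L ω > x}).toReal / x) atTop (nhds (-μ))) :
    Tendsto (fun n : ℕ =>
        Real.log (∫ ω, (1 - k * Real.exp (-(c * L ω))) ^ n ∂P) / Real.log n) atTop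
      (nhds (-(μ / c))) :=
  tendsto_log_div_log_of_tail_bounds hμ hc hk0 hk1 (fun _ => ENNReal.toReal_nonneg)
    (fun n _ hx => tail_mul_pow_le_integral hLm hLnn hc.le hk0.le hk1 n hx)
    (fun n _ hx => integral_le_pow_add_tail hLm hLnn hc.le hk0.le hk1 n hx) htail
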